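/- Let Y ∈ ℝ, let f₁,…,f_K ∈ ℝ, let w₁,…,w_K ≥ 0 with Σ_{k=1}^K w_k = 1, and let f = Σ_{k=1}^K w_k f_k. Let B = [min{Y,f₁,…,f_K}, max{Y,f₁,…,f_K}] and l : ℝ × ℝ → ℝ be such that z ↦ l(Y,z) is twice differentiable with continuous second derivative on B, with M(Y) = sup_{z∈B} l''(Y,z) and m(Y) = inf_{z∈B} l''(Y,z) finite. Then Σ_{k=1}^K w_k l(Y,f_k) ≥ l(Y,f) − (1/2)·(M(Y) − m(Y))·Σ_{k=1}^K w_k (f_k − Y)² + (M(Y)/2)·Σ_{k=1}^K w_k (f_k − f)². -/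

import Mathlib

/-!
Subtracting `m/2 (z - F)²` from `z ↦ l Y z` leaves a convex function on `B`, so each expert's loss
lies above the quadratic `l Y F + l' F (z - F) + m/2 (z - F)²`. Averaging with the weights kills the
linear term, giving `∑ wₖ l Y fₖ ≥ l Y F + m/2 ∑ wₖ (fₖ - F)²`. Splitting `∑ wₖ (fₖ - Y)²` into
`∑ wₖ (fₖ - F)² + (F - Y)²` shows that the claimed bound is this one minus `(M - m)/2 (F - Y)² ≥ 0`.
-/

open Finset Set

lemma ConvexOn.add_mul_sub_le_of_hasDerivWithinAt {S : Set ℝ} {g : ℝ → ℝ} {g' x y : ℝ}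
    (hg : ConvexOn ℝ S g) (hx : x ∈ S) (hy : y ∈ S) (hd : HasDerivWithinAt g g' S x) :
    g x + g' * (y - x) ≤ g y := by
  rcases lt_trichotomy x y with hxy | rfl | hyx
  · have h := hg.le_slope_of_hasDerivWithinAt hx hy hxy hd
    rw [slope_def_field, le_div_iff₀ (sub_pos.2 hxy)] at h
    linarith
  · simp
  · have h := hg.slope_le_of_hasDerivWithinAt hy hx hyx hd
    rw [slope_def_field, div_le_iff₀ (sub_pos.2 hyx)] at h
    linarith

lemma add_mul_sub_add_sq_le_of_hasDerivWithinAt2_ge {S : Set ℝ} (hS : Convex ℝ S)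
    {g g' g'' : ℝ → ℝ} {m : ℝ}
    (hg : ∀ z ∈ S, HasDerivWithinAt g (g' z) S z)
    (hg' : ∀ z ∈ S, HasDerivWithinAt g' (g'' z) S z)
    (hm : ∀ z ∈ S, m ≤ g'' z) {x y : ℝ} (hx : x ∈ S) (hy : y ∈ S) :
    g x + g' x * (y - x) + m / 2 * (y - x) ^ 2 ≤ g y := by
  have hq : ∀ z, HasDerivAt (fun z ↦ m / 2 * (z - x) ^ 2) (m * (z - x)) z := fun z ↦ by
    simpa [mul_assoc, ← mul_assoc (m / 2)] using
      (((hasDerivAt_id z).sub_const x).pow 2).const_mul (m / 2)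
  have hd : ∀ z ∈ S, HasDerivWithinAt (fun z ↦ g z - m / 2 * (z - x) ^ 2)
      (g' z - m * (z - x)) S z := fun z hz ↦ (hg z hz).sub (hq z).hasDerivWithinAt
  have hd' : ∀ z ∈ S, HasDerivWithinAt (fun z ↦ g' z - m * (z - x)) (g'' z - m) S z :=
    fun z hz ↦ (hg' z hz).sub <| by
      simpa using (((hasDerivAt_id z).sub_const x).const_mul m).hasDerivWithinAt (s := S)
  have hconv : ConvexOn ℝ S (fun z ↦ g z - m / 2 * (z - x) ^ 2) :=
    convexOn_of_hasDerivWithinAt2_nonneg hS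
      (fun z hz ↦ (hd z hz).continuousWithinAt)
      (fun z hz ↦ (hd z (interior_subset hz)).mono interior_subset)
      (fun z hz ↦ (hd' z (interior_subset hz)).mono interior_subset)
      (fun z hz ↦ sub_nonneg.2 (hm z (interior_subset hz)))
  have h := hconv.add_mul_sub_le_of_hasDerivWithinAt hx hy (hd x hx)
  simp only [sub_self] at h
  linarith

section WeightedMean

variable {ι : Type*} {s : Finset ι} {w f : ι → ℝ} {F : ℝ}

lemma sum_mul_sub_weightedMean_eq_zero (hw1 : ∑ k ∈ s, w k = 1)
    (hF : F = ∑ k ∈ s, w k * f k) : ∑ k ∈ s, w k * (f k - F) = 0 := by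
  simp only [mul_sub, sum_sub_distrib, ← sum_mul, hw1, ← hF, one_mul, sub_self]

lemma sum_mul_quadratic_weightedMean (hw1 : ∑ k ∈ s, w k = 1)
    (hF : F = ∑ k ∈ s, w k * f k) (a b c : ℝ) :
    ∑ k ∈ s, w k * (a + b * (f k - F) + c * (f k - F) ^ 2)
      = a + c * ∑ k ∈ s, w k * (f k - F) ^ 2 := by
  have hexp : ∀ k ∈ s, w k * (a + b * (f k - F) + c * (f k - F) ^ 2)
      = a * w k + b * (w k * (f k - F)) + c * (w k * (f k - F) ^ 2) := fun _ _ ↦ by ring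
  rw [sum_congr rfl hexp, sum_add_distrib, sum_add_distrib, ← mul_sum, ← mul_sum, ← mul_sum,
    hw1, sum_mul_sub_weightedMean_eq_zero hw1 hF]
  ring

lemma sum_mul_sub_sq_eq_add_sq_weightedMean (hw1 : ∑ k ∈ s, w k = 1)
    (hF : F = ∑ k ∈ s, w k * f k) (Y : ℝ) :
    ∑ k ∈ s, w k * (f k - Y) ^ 2 = ∑ k ∈ s, w k * (f k - F) ^ 2 + (F - Y) ^ 2 := by
  have h := sum_mul_quadratic_weightedMean hw1 hF ((F - Y) ^ 2) (2 * (F - Y)) 1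
  rw [one_mul, add_comm] at h
  rw [← h]
  exact sum_congr rfl fun _ _ ↦ by ring

end WeightedMean

theorem weighted_expert_loss_lower_bound_two_general
    (K : ℕ) (Y : ℝ) (f : Fin K → ℝ) (w : Fin K → ℝ)
    (hw : ∀ k, 0 ≤ w k) (hw1 : ∑ k, w k = 1)
    (F : ℝ) (hF : F = ∑ k, w k * f k)
    (lo hi : ℝ)
    (hlo : IsLeast (insert Y (Set.range f)) lo)
    (hhi : IsGreatest (insert Y (Set.range f)) hi)
    (l : ℝ → ℝ → ℝ) (l1 l2 : ℝ → ℝ)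
    (hd1 : ∀ z ∈ Set.Icc lo hi, HasDerivWithinAt (l Y) (l1 z) (Set.Icc lo hi) z)
    (hd2 : ∀ z ∈ Set.Icc lo hi, HasDerivWithinAt l1 (l2 z) (Set.Icc lo hi) z)
    (MY mY : ℝ)
    (hMY : IsLUB (l2 '' Set.Icc lo hi) MY)
    (hmY : IsGLB (l2 '' Set.Icc lo hi) mY) :
    (∑ k, w k * l Y (f k)) ≥
      l Y F - (1 / 2) * (MY - mY) * (∑ k, w k * (f k - Y) ^ 2)
        + (MY / 2) * ∑ k, w k * (f k - F) ^ 2 := by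
  have hf : ∀ k, f k ∈ Icc lo hi := fun k ↦
    ⟨hlo.2 (mem_insert_of_mem _ ⟨k, rfl⟩), hhi.2 (mem_insert_of_mem _ ⟨k, rfl⟩)⟩
  have hFS : F ∈ Icc lo hi := by
    simpa only [hF, smul_eq_mul] using
      (convex_Icc lo hi).sum_mem (fun k _ ↦ hw k) hw1 (fun k _ ↦ hf k)
  have hmM : mY ≤ MY := isGLB_le_isLUB hmY hMY ⟨l2 F, F, hFS, rfl⟩
  have htaylor : ∀ k, l Y F + l1 F * (f k - F) + mY / 2 * (f k - F) ^ 2 ≤ l Y (f k) :=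
    fun k ↦ add_mul_sub_add_sq_le_of_hasDerivWithinAt2_ge (convex_Icc lo hi) hd1 hd2
      (fun z hz ↦ hmY.1 ⟨z, hz, rfl⟩) hFS (hf k)
  have hjensen : l Y F + mY / 2 * ∑ k, w k * (f k - F) ^ 2 ≤ ∑ k, w k * l Y (f k) := by
    rw [← sum_mul_quadratic_weightedMean hw1 hF _ (l1 F)]
    exact sum_le_sum fun k _ ↦ mul_le_mul_of_nonneg_left (htaylor k) (hw k)
  rw [sum_mul_sub_sq_eq_add_sq_weightedMean hw1 hF Y]
  nlinarith [sq_nonneg (F - Y)]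

/-- Second intermediate bound in the proof of the GAD theorem. -/
theorem weighted_expert_loss_lower_bound_two
    (K : ℕ) (hK : 0 < K) (Y : ℝ) (f : Fin K → ℝ) (w : Fin K → ℝ)
    (hw : ∀ k, 0 ≤ w k) (hw1 : ∑ k, w k = 1)
    (F : ℝ) (hF : F = ∑ k, w k * f k)
    (lo hi : ℝ)
    (hlo : IsLeast (insert Y (Set.range f)) lo)
    (hhi : IsGreatest (insert Y (Set.range f)) hi)
    (l : ℝ → ℝ → ℝ) (l1 l2 : ℝ → ℝ)
    (hd1 : ∀ z ∈ Set.Icc lo hi, HasDerivWithinAt (l Y) (l1 z) (Set.Icc lo hi) z)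
    (hd2 : ∀ z ∈ Set.Icc lo hi, HasDerivWithinAt l1 (l2 z) (Set.Icc lo hi) z)
    (hcont : ContinuousOn l2 (Set.Icc lo hi))
    (MY mY : ℝ)
    (hMY : IsLUB (l2 '' Set.Icc lo hi) MY)
    (hmY : IsGLB (l2 '' Set.Icc lo hi) mY) :
    (∑ k, w k * l Y (f k)) ≥
      l Y F - (1 / 2) * (MY - mY) * (∑ k, w k * (f k - Y) ^ 2)
        + (MY / 2) * ∑ k, w k * (f k - F) ^ 2 :=
  weighted_expert_loss_lower_bound_two_general K Y f w hw hw1 F hF lo hi hlo hhi l l1 l2 hd1 hd2 MY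
    mY hMY hmY
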